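/- Let q_1, ..., q_m ∈ ℝ^k, let P be their convex hull, and let ξ ∈ P. Then there exists a partition of {1,...,m} into sets J₀ and J₁ with J₁ nonempty, an N₀ ∈ ℕ, and for each n a convex combination ξ_n = Σ_j ν_{j,n} q_j with ν_{j,n} ∈ (1/n)·ℕ₀, such that ν_{j,n} = 0 for all j ∈ J₀ and n ≥ N₀, ν_{j,n} > 0 for all j ∈ J₁ and n ≥ N₀, each sequence (ν_{j,n})_n converges, the limits are strictly positive for j ∈ J₁, and ξ_n → ξ. -/

import Mathlib

/-!
Write `ξ = ∑ μ j • q j` with barycentric weights `μ` and fix `i₀` with `μ i₀ > 0`. Rounding every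
other weight down to a multiple of `1 / n` and giving the remainder to `i₀` yields admissible
weights converging to `μ`; the remainder is at least `μ i₀`, so it never becomes negative. Take
`J₁` to be the support of `μ`: zero weights round to zero, positive ones are eventually positive.
-/

open Filter Topology Finset

theorem exists_weights_of_mem_convexHull_range {R E ι : Type*} [Field R] [LinearOrder R]
    [IsStrictOrderedRing R] [AddCommGroup E] [Module R E] [Fintype ι] {q : ι → E} {x : E}
    (hx : x ∈ convexHull R (Set.range q)) :
    ∃ μ : ι → R, (∀ i, 0 ≤ μ i) ∧ ∑ i, μ i = 1 ∧ ∑ i, μ i • q i = x := by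
  classical
  rw [convexHull_range_eq_exists_affineCombination] at hx
  obtain ⟨s, w, hw₀, hw₁, rfl⟩ := hx
  refine ⟨fun i => if i ∈ s then w i else 0, fun i => ?_, ?_, ?_⟩
  · dsimp only
    split_ifs with hi
    exacts [hw₀ i hi, le_rfl]
  · rw [sum_ite_mem, univ_inter, hw₁]
  · simp only [ite_smul, zero_smul]
    rw [sum_ite_mem, univ_inter, s.affineCombination_eq_linear_combination q w hw₁]

section RoundWeights

variable {R ι : Type*} [Field R] [LinearOrder R] [FloorRing R] [Fintype ι] [DecidableEq ι]

noncomputable def roundWeights (μ : ι → R) (i₀ : ι) (n : ℕ) (i : ι) : R :=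
  if i = i₀ then 1 - ∑ j ∈ univ.erase i₀, (⌊μ j * n⌋₊ : R) / n else ⌊μ i * n⌋₊ / n

theorem roundWeights_of_ne {μ : ι → R} {i₀ i : ι} (n : ℕ) (hi : i ≠ i₀) :
    roundWeights μ i₀ n i = ⌊μ i * n⌋₊ / n := if_neg hi

theorem sum_roundWeights (μ : ι → R) (i₀ : ι) (n : ℕ) : ∑ i, roundWeights μ i₀ n i = 1 := by
  rw [← add_sum_erase _ _ (mem_univ i₀), roundWeights, if_pos rfl,
    sum_congr rfl fun i hi => roundWeights_of_ne n (ne_of_mem_erase hi), sub_add_cancel]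

variable [IsStrictOrderedRing R]

theorem roundWeights_eq_zero {μ : ι → R} {i₀ i : ι} (n : ℕ) (hi : i ≠ i₀) (hμi : μ i = 0) :
    roundWeights μ i₀ n i = 0 := by
  rw [roundWeights_of_ne n hi, hμi, zero_mul, Nat.floor_zero, Nat.cast_zero, zero_div]

theorem natFloor_mul_div_le {a : R} (ha : 0 ≤ a) (n : ℕ) : (⌊a * n⌋₊ : R) / n ≤ a := by
  rcases n.eq_zero_or_pos with rfl | hn
  · simpa using ha
  · rw [div_le_iff₀ (by positivity)]
    exact Nat.floor_le (by positivity)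

theorem le_roundWeights_self {μ : ι → R} (hμ₀ : ∀ i, 0 ≤ μ i) (hμ₁ : ∑ i, μ i = 1) (i₀ : ι)
    (n : ℕ) : μ i₀ ≤ roundWeights μ i₀ n i₀ := by
  have hrest : ∑ j ∈ univ.erase i₀, (⌊μ j * n⌋₊ : R) / n ≤ ∑ j ∈ univ.erase i₀, μ j :=
    sum_le_sum fun j _ => natFloor_mul_div_le (hμ₀ j) n
  rw [← add_sum_erase _ _ (mem_univ i₀)] at hμ₁
  rw [roundWeights, if_pos rfl]
  linarith

theorem exists_nat_roundWeights_eq {μ : ι → R} (hμ₀ : ∀ i, 0 ≤ μ i) (hμ₁ : ∑ i, μ i = 1)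
    (i₀ i : ι) {n : ℕ} (hn : n ≠ 0) : ∃ a : ℕ, roundWeights μ i₀ n i = a / n := by
  by_cases hi : i = i₀
  · subst hi
    set S := ∑ j ∈ univ.erase i, ⌊μ j * n⌋₊
    have hself : roundWeights μ i n i = (n - S : R) / n := by
      rw [roundWeights, if_pos rfl, ← sum_div, sub_div, div_self (by exact_mod_cast hn)]
      push_cast [S]
      rfl
    have hS : (S : R) ≤ n := by
      have h := (hμ₀ i).trans (le_roundWeights_self hμ₀ hμ₁ i n)
      rw [hself, le_div_iff₀ (by positivity), zero_mul] at h
      linarith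
    exact ⟨n - S, by rw [hself, Nat.cast_sub (by exact_mod_cast hS)]⟩
  · exact ⟨_, roundWeights_of_ne n hi⟩

variable [TopologicalSpace R] [OrderTopology R]

theorem tendsto_roundWeights {μ : ι → R} (hμ₀ : ∀ i, 0 ≤ μ i) (hμ₁ : ∑ i, μ i = 1)
    (i₀ i : ι) : Tendsto (fun n => roundWeights μ i₀ n i) atTop (𝓝 (μ i)) := by
  have hrounded : ∀ j, Tendsto (fun n : ℕ => (⌊μ j * n⌋₊ : R) / n) atTop (𝓝 (μ j)) := fun j =>
    (tendsto_nat_floor_mul_div_atTop (hμ₀ j)).comp tendsto_natCast_atTop_atTop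
  by_cases hi : i = i₀
  · subst hi
    have hμi : μ i = 1 - ∑ j ∈ univ.erase i, μ j := by
      rw [← hμ₁, ← add_sum_erase _ _ (mem_univ i), add_sub_cancel_right]
    simp only [roundWeights, hμi]
    exact tendsto_const_nhds.sub (tendsto_finsetSum _ fun j _ => hrounded j)
  · simpa only [roundWeights_of_ne _ hi] using hrounded i

end RoundWeights

theorem stmt1 (k m : ℕ) (q : Fin m → EuclideanSpace ℝ (Fin k))
    (ξ : EuclideanSpace ℝ (Fin k)) (hξ : ξ ∈ convexHull ℝ (Set.range q)) :
    ∃ (J₀ J₁ : Finset (Fin m)) (N₀ : ℕ) (ν : ℕ → Fin m → ℝ) (L : Fin m → ℝ),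
      Disjoint J₀ J₁ ∧ J₀ ∪ J₁ = Finset.univ ∧ J₁.Nonempty ∧
      (∀ n : ℕ, 1 ≤ n → (∀ j, ∃ a : ℕ, ν n j = (a : ℝ) / n) ∧ ∑ j, ν n j = 1) ∧
      (∀ j ∈ J₀, ∀ n ≥ N₀, ν n j = 0) ∧
      (∀ j ∈ J₁, ∀ n ≥ N₀, 0 < ν n j) ∧
      (∀ j, Tendsto (fun n => ν n j) atTop (𝓝 (L j))) ∧
      (∀ j ∈ J₁, 0 < L j) ∧
      Tendsto (fun n => ∑ j, ν n j • q j) atTop (𝓝 ξ) := by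
  obtain ⟨μ, hμ₀, hμ₁, rfl⟩ := exists_weights_of_mem_convexHull_range hξ
  obtain ⟨i₀, hi₀⟩ : ∃ i₀, 0 < μ i₀ := by
    by_contra! h
    simp [le_antisymm (h _) (hμ₀ _)] at hμ₁
  set J₁ := univ.filter fun j => 0 < μ j
  have hν := tendsto_roundWeights hμ₀ hμ₁ i₀
  obtain ⟨N₀, hN₀⟩ := eventually_atTop.1 <| (eventually_all_finset J₁).2 fun j hj =>
    (hν j).eventually_const_lt (mem_filter.1 hj).2
  refine ⟨univ.filter fun j => ¬0 < μ j, J₁, N₀, roundWeights μ i₀, μ,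
    disjoint_filter_filter_not _ _ _ |>.symm, by rw [union_comm, filter_union_filter_not_eq],
    ⟨i₀, mem_filter.2 ⟨mem_univ _, hi₀⟩⟩, fun n hn =>
    ⟨fun j => exists_nat_roundWeights_eq hμ₀ hμ₁ i₀ j (by omega), sum_roundWeights μ i₀ n⟩,
    fun j hj n _ => ?_, fun j hj n hn => hN₀ n hn j hj, hν, fun j hj => (mem_filter.1 hj).2,
    tendsto_finsetSum _ fun j _ => (hν j).smul_const (q j)⟩
  have hμj : μ j = 0 := le_antisymm (not_lt.1 (mem_filter.1 hj).2) (hμ₀ j)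
  exact roundWeights_eq_zero n (by rintro rfl; exact hi₀.ne' hμj) hμj
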